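/- arXiv:2004.14434 — 3 statements merged into one kernel-verified Lean document; each statement's English description precedes it below -/
import Mathlib

section
/- Let ν < -1 and let μ_ν be the measure on (0,∞) with density x^{2ν+1} dx. Then there exist constants C₁, C₂ > 0 depending only on ν such that for all x > r > 0, C₁·min(1, r/x)·(x−r)^{2ν+2} ≤ μ_ν(B(x,r)) ≤ C₂·min(1, r/x)·(x−r)^{2ν+2}. -/
open MeasureTheory Set

/-! The ball is the interval `(x - r, x + r)`; with `m = -(2ν+2) > 0` and `u = (x - r)/(x + r)`
its measure is `(x - r)^(2ν+2) (1 - u^m) / m`. Bernoulli's inequality makes `1 - u^m` comparable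
to `1 - u = 2r/(x + r)`, which lies between `r/x` and `2r/x`. -/

noncomputable def besselMeasure (ν : ℝ) : Measure ℝ :=
  (volume.restrict (Set.Ioi (0:ℝ))).withDensity fun x => ENNReal.ofReal (x ^ (2*ν+1))

lemma besselMeasure_Ioo {ν a b : ℝ} (hν : ν ≠ -1) (ha : 0 < a) (hab : a ≤ b) :
    besselMeasure ν (Ioo a b) =
      ENNReal.ofReal ((b ^ (2*ν+2) - a ^ (2*ν+2)) / (2*ν+2)) := by
  have hpos : ∀ y ∈ Icc a b, 0 < y := fun y hy => ha.trans_le hy.1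
  have hint : IntegrableOn (fun y : ℝ => y ^ (2*ν+1)) (Ioo a b) :=
    (ContinuousOn.integrableOn_Icc fun y hy =>
      (Real.continuousAt_rpow_const y _ (Or.inl (hpos y hy).ne')).continuousWithinAt).mono_set
      Ioo_subset_Icc_self
  have hnonneg : 0 ≤ᵐ[volume.restrict (Ioo a b)] fun y : ℝ => y ^ (2*ν+1) :=
    (ae_restrict_iff' measurableSet_Ioo).2 <| .of_forall fun y hy =>
      Real.rpow_nonneg (hpos y (Ioo_subset_Icc_self hy)).le _
  have hsub : Ioo a b ⊆ Ioi 0 := fun y hy => ha.trans hy.1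
  have hzero : (0 : ℝ) ∉ uIcc a b := fun h => (hpos 0 (by rwa [uIcc_of_le hab] at h)).false
  rw [besselMeasure, withDensity_apply _ measurableSet_Ioo,
    Measure.restrict_restrict measurableSet_Ioo, inter_eq_left.2 hsub,
    ← ofReal_integral_eq_lintegral_ofReal hint hnonneg, ← integral_Ioc_eq_integral_Ioo,
    ← intervalIntegral.integral_of_le hab,
    integral_rpow (Or.inr ⟨fun h => hν (by linarith), hzero⟩)]
  ring_nf

lemma besselMeasure_ball {ν x r : ℝ} (hν : ν ≠ -1) (hr : 0 ≤ r) (hrx : r < x) :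
    besselMeasure ν (Metric.ball x r) =
      ENNReal.ofReal ((x - r) ^ (2*ν+2) * (1 - ((x - r) / (x + r)) ^ (-(2*ν+2)))
        / (-(2*ν+2))) := by
  have hsub : 0 < x - r := by linarith
  have hadd : 0 < x + r := by linarith
  rw [Real.ball_eq_Ioo, besselMeasure_Ioo hν hsub (by linarith),
    Real.div_rpow hsub.le hadd.le, Real.rpow_neg hsub.le, Real.rpow_neg hadd.le]
  have : (x - r) ^ (2*ν+2) ≠ 0 := (Real.rpow_pos_of_pos hsub _).ne'
  field_simp
  ring_nf

lemma one_sub_rpow_mem_Icc {u m : ℝ} (hu0 : 0 ≤ u) (hu1 : u ≤ 1) (hm : 0 ≤ m) :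
    1 - u ^ m ∈ Icc (min 1 m * (1 - u)) (max 1 m * (1 - u)) := by
  have hs : -1 ≤ u - 1 := by linarith
  have hu : 1 + (u - 1) = u := by ring
  rcases le_total 1 m with h1m | hm1
  · rw [min_eq_left h1m, max_eq_right h1m]
    have hle := Real.rpow_le_rpow_of_exponent_ge' hu0 hu1 zero_le_one h1m
    have hge := one_add_mul_self_le_rpow_one_add hs h1m
    rw [Real.rpow_one] at hle
    rw [hu] at hge
    constructor <;> linarith
  · rw [min_eq_right hm1, max_eq_left hm1]
    have hle := rpow_one_add_le_one_add_mul_self hs hm hm1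
    have hge := Real.rpow_le_rpow_of_exponent_ge' hu0 hu1 hm hm1
    rw [Real.rpow_one] at hge
    rw [hu] at hle
    constructor <;> linarith

lemma one_sub_sub_div_add_mem_Icc {x r : ℝ} (hr : 0 ≤ r) (hx : 0 < x) (hrx : r ≤ x) :
    1 - (x - r) / (x + r) ∈ Icc (r / x) (2 * (r / x)) := by
  have hadd : 0 < x + r := by linarith
  have h : 1 - (x - r) / (x + r) = 2 * r / (x + r) := by field_simp; ring
  rw [h, mem_Icc, div_le_div_iff₀ hx hadd, mul_div_assoc', div_le_div_iff₀ hadd hx]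
  constructor <;> nlinarith

lemma one_sub_rpow_sub_div_add_mem_Icc {x r m : ℝ} (hr : 0 ≤ r) (hx : 0 < x) (hrx : r ≤ x)
    (hm : 0 ≤ m) :
    1 - ((x - r) / (x + r)) ^ m ∈ Icc (min 1 m * (r / x)) (2 * max 1 m * (r / x)) := by
  obtain ⟨hlo, hhi⟩ := one_sub_sub_div_add_mem_Icc hr hx hrx
  obtain ⟨hlo', hhi'⟩ := one_sub_rpow_mem_Icc (u := (x - r) / (x + r))
    (div_nonneg (by linarith) (by linarith)) (div_le_one_of_le₀ (by linarith) (by linarith)) hm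
  have hmin : 0 ≤ min 1 m := le_min zero_le_one hm
  have hmax : 0 ≤ max 1 m := zero_le_one.trans (le_max_left 1 m)
  constructor
  · exact (mul_le_mul_of_nonneg_left hlo hmin).trans hlo'
  · calc _ ≤ max 1 m * (1 - (x - r) / (x + r)) := hhi'
      _ ≤ max 1 m * (2 * (r / x)) := mul_le_mul_of_nonneg_left hhi hmax
      _ = 2 * max 1 m * (r / x) := by ring

theorem measure_ball_comparable_of_lt_neg_one (ν : ℝ) (hν : ν < -1) :
    ∃ C₁ C₂ : ℝ, 0 < C₁ ∧ 0 < C₂ ∧ ∀ x r : ℝ, 0 < r → r < x →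
      ENNReal.ofReal (C₁ * min 1 (r / x) * (x - r) ^ (2*ν+2)) ≤
        besselMeasure ν (Metric.ball x r) ∧
      besselMeasure ν (Metric.ball x r) ≤
        ENNReal.ofReal (C₂ * min 1 (r / x) * (x - r) ^ (2*ν+2)) := by
  set m := -(2*ν+2) with hm_def
  have hm : 0 < m := by linarith
  refine ⟨min 1 m / m, 2 * max 1 m / m, div_pos (lt_min one_pos hm) hm,
    div_pos (by positivity) hm, fun x r hr hrx => ?_⟩
  have hx : 0 < x := hr.trans hrx
  obtain ⟨hlo, hhi⟩ := one_sub_rpow_sub_div_add_mem_Icc hr.le hx hrx.le hm.le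
  rw [besselMeasure_ball (by linarith) hr.le hrx, ← hm_def,
    min_eq_right ((div_le_one hx).2 hrx.le)]
  constructor <;> apply ENNReal.ofReal_le_ofReal
  · calc min 1 m / m * (r / x) * (x - r) ^ (2*ν+2)
        = (x - r) ^ (2*ν+2) * (min 1 m * (r / x)) / m := by ring
      _ ≤ _ := by gcongr
  · calc _ ≤ (x - r) ^ (2*ν+2) * (2 * max 1 m * (r / x)) / m := by gcongr
      _ = 2 * max 1 m / m * (r / x) * (x - r) ^ (2*ν+2) := by ring
end

section
/- Let ν ≥ −1/2, ε ∈ (0, 2ν+2), and c > 0. Then there exists C > 0 such that for all x, y > 0, sup_{t>0} μ_ν(B(x,√t))^{-1} · exp(−|x−y|²/(ct)) · |x−y|^ε · x^{2ν+1} ≤ C·min(x, |x−y|)^{ε−1}, where μ_ν(B(x,√t)) is the μ_ν-measure of the interval (max(x−√t,0), x+√t) with μ_ν of density z^{2ν+1}. -/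
/-! The ball `B(x, r)`, `r = √t`, contains `(x + r/2, x + r)`, where the density is at least
`((x + r)/2)^(2ν+1)`; this bounds its measure from below. With `u = |x - y|² / (c t)` the Gaussian
factor is controlled through `u^a e^(-u) ≤ a^a`. If `|x - y| ≤ x`, take `a = 1/2`: the factor
`x^(2ν+1) ≤ (x + r)^(2ν+1)` cancels against the measure. If `x ≤ |x - y|`, take `a = ν + 1` and
bound the measure below by `(r/2)^(2ν+2)`; since `ε < 2ν + 2`, `|x - y|^(ε-2ν-2) ≤ x^(ε-2ν-2)`. -/

open MeasureTheory Set

open Real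

lemma rpow_le_rpow_self_mul_exp {a u : ℝ} (ha : 0 < a) (hu : 0 ≤ u) :
    u ^ a ≤ a ^ a * exp u := by
  have h : u / a ≤ exp (u / a) := by linarith [add_one_le_exp (u / a)]
  calc u ^ a = a ^ a * (u / a) ^ a := by
        rw [div_rpow hu ha.le, mul_div_cancel₀ _ (rpow_pos_of_pos ha a).ne']
    _ ≤ a ^ a * exp (u / a) ^ a := by gcongr
    _ = a ^ a * exp u := by rw [← exp_mul, div_mul_cancel₀ _ ha.ne']

lemma exp_neg_sq_div_le {b c s r : ℝ} (hb : 0 < b) (hc : 0 < c) (hs : 0 < s) (hr : 0 < r) :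
    exp (-(s ^ 2) / (c * r ^ 2)) ≤ (b * c / 2) ^ (b / 2) * (r / s) ^ b := by
  set u := s ^ 2 / (c * r ^ 2)
  have hu : 0 < u := by positivity
  have hu_inv : u⁻¹ ^ (b / 2) = c ^ (b / 2) * (r / s) ^ b := by
    rw [show u⁻¹ = c * (r / s) ^ (2 : ℝ) by simp only [u]; rw [rpow_two]; field_simp,
      mul_rpow hc.le (by positivity), ← rpow_mul (by positivity)]
    ring_nf
  calc exp (-(s ^ 2) / (c * r ^ 2)) = exp (-u) := by rw [neg_div]
    _ ≤ (b / 2) ^ (b / 2) * u⁻¹ ^ (b / 2) := by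
        rw [inv_rpow hu.le, ← div_eq_mul_inv, le_div_iff₀ (by positivity)]
        calc exp (-u) * u ^ (b / 2) ≤ exp (-u) * ((b / 2) ^ (b / 2) * exp u) := by
              gcongr; exact rpow_le_rpow_self_mul_exp (half_pos hb) hu.le
          _ = (b / 2) ^ (b / 2) := by
              rw [mul_left_comm, ← exp_add, neg_add_cancel, exp_zero, mul_one]
    _ = (b * c / 2) ^ (b / 2) * (r / s) ^ b := by
        rw [hu_inv, ← mul_assoc, ← mul_rpow (by positivity) hc.le]
        ring_nf

lemma ofReal_le_besselMeasure_ball {ν x r : ℝ} (hν : 0 ≤ 2 * ν + 1) (hx : 0 ≤ x) (hr : 0 < r) :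
    ENNReal.ofReal (r / 2 * ((x + r) / 2) ^ (2 * ν + 1)) ≤ besselMeasure ν (Metric.ball x r) := by
  have hsub : Ioo (x + r / 2) (x + r) ⊆ Metric.ball x r ∩ Ioi 0 := fun z ⟨hz₁, hz₂⟩ =>
    ⟨by rw [Metric.mem_ball, Real.dist_eq, abs_lt]; constructor <;> linarith,
      show 0 < z by linarith⟩
  rw [besselMeasure, withDensity_apply _ measurableSet_ball,
    Measure.restrict_restrict measurableSet_ball]
  calc ENNReal.ofReal (r / 2 * ((x + r) / 2) ^ (2 * ν + 1))
      = ∫⁻ _ in Ioo (x + r / 2) (x + r), ENNReal.ofReal (((x + r) / 2) ^ (2 * ν + 1)) := by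
        rw [setLIntegral_const, Real.volume_Ioo, show x + r - (x + r / 2) = r / 2 by ring,
          ← ENNReal.ofReal_mul (by positivity), mul_comm]
    _ ≤ ∫⁻ z in Ioo (x + r / 2) (x + r), ENNReal.ofReal (z ^ (2 * ν + 1)) :=
        setLIntegral_mono (by fun_prop) fun z hz =>
          ENNReal.ofReal_le_ofReal (rpow_le_rpow (by positivity) (by linarith [hz.1]) hν)
    _ ≤ ∫⁻ z in Metric.ball x r ∩ Ioi 0, ENNReal.ofReal (z ^ (2 * ν + 1)) :=
        lintegral_mono_set hsub

lemma toReal_besselMeasure_ball_inv_le {ν x r : ℝ} (hν : 0 ≤ 2 * ν + 1) (hx : 0 ≤ x)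
    (hr : 0 < r) :
    (besselMeasure ν (Metric.ball x r)).toReal⁻¹ ≤ (r / 2 * ((x + r) / 2) ^ (2 * ν + 1))⁻¹ := by
  by_cases htop : besselMeasure ν (Metric.ball x r) = ⊤
  · rw [htop, ENNReal.toReal_top, inv_zero]
    positivity
  · exact inv_anti₀ (by positivity)
      ((ENNReal.ofReal_le_iff_le_toReal htop).mp (ofReal_le_besselMeasure_ball hν hx hr))

section GaussianRatio

variable {q ε x s r E K : ℝ}

lemma gaussian_ratio_le_near (hq : 0 ≤ q) (hx : 0 ≤ x) (hs : 0 < s) (hr : 0 < r)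
    (hK : 0 ≤ K) (hE : E ≤ K * (r / s)) :
    (r / 2 * ((x + r) / 2) ^ q)⁻¹ * E * s ^ ε * x ^ q ≤ 2 ^ (q + 1) * K * s ^ (ε - 1) := by
  have hP : 0 < ((x + r) / 2) ^ q := by positivity
  have hx_le : x ^ q ≤ 2 ^ q * ((x + r) / 2) ^ q := by
    rw [← mul_rpow (by norm_num) (by positivity), mul_div_cancel₀ _ two_ne_zero]
    exact rpow_le_rpow hx (by linarith) hq
  calc (r / 2 * ((x + r) / 2) ^ q)⁻¹ * E * s ^ ε * x ^ q
      ≤ (r / 2 * ((x + r) / 2) ^ q)⁻¹ * (K * (r / s)) * s ^ ε * (2 ^ q * ((x + r) / 2) ^ q) := by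
        gcongr
    _ = 2 ^ q * 2 * K * (s ^ ε / s) := by field_simp
    _ = 2 ^ (q + 1) * K * s ^ (ε - 1) := by rw [rpow_sub_one hs.ne', rpow_add_one two_ne_zero]

lemma gaussian_ratio_le_far (hq : 0 ≤ q) (hε : ε < q + 1) (hx : 0 < x) (hxs : x ≤ s)
    (hr : 0 < r) (hK : 0 ≤ K) (hE : E ≤ K * (r / s) ^ (q + 1)) :
    (r / 2 * ((x + r) / 2) ^ q)⁻¹ * E * s ^ ε * x ^ q ≤ 2 ^ (q + 1) * K * x ^ (ε - 1) := by
  have hs : 0 < s := hx.trans_le hxs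
  have hball : (r / 2) ^ (q + 1) ≤ r / 2 * ((x + r) / 2) ^ q := by
    rw [rpow_add_one (by positivity), mul_comm]
    gcongr
    linarith
  calc (r / 2 * ((x + r) / 2) ^ q)⁻¹ * E * s ^ ε * x ^ q
      ≤ (r / 2 * ((x + r) / 2) ^ q)⁻¹ * (K * (r / s) ^ (q + 1)) * s ^ ε * x ^ q := by gcongr
    _ ≤ ((r / 2) ^ (q + 1))⁻¹ * (K * (r / s) ^ (q + 1)) * s ^ ε * x ^ q := by gcongr
    _ = 2 ^ (q + 1) * K * (s ^ (ε - (q + 1)) * x ^ q) := by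
        rw [div_rpow hr.le hs.le, div_rpow hr.le two_pos.le, rpow_sub hs]
        field_simp
    _ ≤ 2 ^ (q + 1) * K * (x ^ (ε - (q + 1)) * x ^ q) := by
        gcongr _ * (?_ * _)
        exact rpow_le_rpow_of_nonpos hx hxs (by linarith)
    _ = 2 ^ (q + 1) * K * x ^ (ε - 1) := by rw [← rpow_add hx]; ring_nf

lemma gaussian_ratio_le_min {c : ℝ} (hq : 0 ≤ q) (hε : ε < q + 1) (hc : 0 < c) (hx : 0 < x)
    (hs : 0 < s) (hr : 0 < r) :
    (r / 2 * ((x + r) / 2) ^ q)⁻¹ * exp (-(s ^ 2) / (c * r ^ 2)) * s ^ ε * x ^ q ≤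
      2 ^ (q + 1) * (((q + 1) * c / 2) ^ ((q + 1) / 2) + (c / 2) ^ ((1 : ℝ) / 2)) *
        min x s ^ (ε - 1) := by
  rcases le_total x s with hxs | hsx
  · rw [min_eq_left hxs]
    refine (gaussian_ratio_le_far hq hε hx hxs hr (by positivity)
      (exp_neg_sq_div_le (by linarith) hc hs hr)).trans ?_
    gcongr
    exact le_add_of_nonneg_right (by positivity)
  · rw [min_eq_right hsx]
    have h_exp := exp_neg_sq_div_le one_pos hc hs hr
    rw [rpow_one, one_mul] at h_exp
    refine (gaussian_ratio_le_near hq hx.le hs hr (by positivity) h_exp).trans ?_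
    gcongr
    exact le_add_of_nonneg_left (by positivity)

end GaussianRatio

theorem sup_gauss_pointwise_bound (ν ε c : ℝ) (hν : -1/2 ≤ ν)
    (hε0 : 0 < ε) (hε : ε < 2 * ν + 2) (hc : 0 < c) :
    ∃ C : ℝ, 0 < C ∧ ∀ x y t : ℝ, 0 < x → 0 < y → 0 < t →
      (besselMeasure ν (Metric.ball x (Real.sqrt t))).toReal⁻¹ *
          Real.exp (-(|x - y|^2) / (c * t)) * |x - y| ^ ε * x ^ (2 * ν + 1)
        ≤ C * (min x |x - y|) ^ (ε - 1) := by
  set q := 2 * ν + 1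
  have hq : 0 ≤ q := by linarith
  refine ⟨2 ^ (q + 1) * (((q + 1) * c / 2) ^ ((q + 1) / 2) + (c / 2) ^ ((1 : ℝ) / 2)),
    by positivity, fun x y t hx _ ht => ?_⟩
  rcases (abs_nonneg (x - y)).eq_or_lt with hs | hs
  · rw [← hs, zero_rpow hε0.ne', mul_zero, zero_mul]
    exact mul_nonneg (by positivity) (rpow_nonneg (le_min hx.le le_rfl) _)
  set s := |x - y|
  set r := √t
  have hr : 0 < r := sqrt_pos.mpr ht
  rw [← sq_sqrt ht.le]
  calc (besselMeasure ν (Metric.ball x r)).toReal⁻¹ * exp (-(s ^ 2) / (c * r ^ 2)) * s ^ ε * x ^ q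
      ≤ (r / 2 * ((x + r) / 2) ^ q)⁻¹ * exp (-(s ^ 2) / (c * r ^ 2)) * s ^ ε * x ^ q := by
        gcongr ?_ * _ * _ * _
        exact toReal_besselMeasure_ball_inv_le hq hx.le hr
    _ ≤ _ := gaussian_ratio_le_min hq (by linarith) hc hx hs hr
end

section
/- Let ν > 0, let 0 < γ < min(1/2, ν), and let δ ∈ (−γ, γ). Define K_{t,ν}(x,y) = (2t)^{-1} y^ν x^{−3ν} I_ν(xy/(2t)) exp(−(x²+y²)/(4t)). Then there exists C > 0 such that for every dyadic interval Q = [2^n, 2^{n+1}] and every y ∈ Q*, ∫_{((Q**)^c)} sup_{t>0} t^δ · K_{t,ν}(x,y) dμ_ν(x) ≤ C·d_Q^{2δ}, where dμ_ν(x) = x^{2ν+1} dx, d_Q = 2^n, and Q*, Q** are fixed concentric enlargements of Q. -/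
open MeasureTheory Set

/-- The modified Bessel function of the first kind of order `ν`. -/
noncomputable def besselI (ν x : ℝ) : ℝ :=
  ∑' m : ℕ, (x / 2) ^ (2 * (m:ℝ) + ν) / ((m.factorial : ℝ) * Real.Gamma ((m:ℝ) + ν + 1))

/-- The kernel `K_{t,ν}(x,y) = (2t)⁻¹ y^ν x^{-3ν} I_ν(xy/(2t)) exp(-(x²+y²)/(4t))`. -/
noncomputable def Kker (ν t x y : ℝ) : ℝ :=
  (2 * t)⁻¹ * y ^ ν * x ^ (-(3 * ν)) * besselI ν (x * y / (2 * t)) *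
    Real.exp (-((x^2 + y^2) / (4 * t)))

/-- The concentric enlargement by a factor `κ` of the interval `[a,b]`. -/
def enl (κ a b : ℝ) : Set ℝ :=
  Set.Icc ((a + b) / 2 - κ * (b - a) / 2) ((a + b) / 2 + κ * (b - a) / 2)

open Real
open scoped ENNReal Nat

/-!
The power series of `I_ν` gives `I_ν(s) ≤ (s/2)^ν e^s / Γ(ν+1)` for every `s > 0`. Since
`xy/(2t) - (x²+y²)/(4t) = -(x-y)²/(4t)`, this bounds `t^δ K_{t,ν}(x,y)` by a multiple of
`y^{2ν} x^{-2ν} t^{-β} e^{-(x-y)²/(4t)}` with `β = 1 + ν - δ`, and `u^β e^{-u} ≤ β^β e^{-β}`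
removes `t`, leaving `C y^{2ν} x^{-2ν} |x-y|^{-2β}`. Off `Q**` one has `|x-y| ≥ ε (x + d_Q)`, so
against `x^{2ν+1} dx` the integrand is at most a multiple of `d_Q^{2ν} (x+d_Q)^{1-2β}`, whose
integral over `(0,∞)` is a multiple of `d_Q^{2-2β}` because `β > 1`, i.e. `δ < ν`.
-/

theorem Real.factorial_mul_Gamma_le {ν : ℝ} (hν : 0 ≤ ν) (m : ℕ) :
    (m ! : ℝ) * Gamma (ν + 1) ≤ Gamma (m + ν + 1) := by
  induction m with
  | zero => simp
  | succ k ih =>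
    have hk : 0 < (k : ℝ) + ν + 1 := by positivity
    calc ((k + 1)! : ℝ) * Gamma (ν + 1) = (k + 1) * ((k ! : ℝ) * Gamma (ν + 1)) := by
          push_cast [Nat.factorial_succ]; ring
      _ ≤ (k + ν + 1) * Gamma (k + ν + 1) := by
          gcongr; linarith
      _ = Gamma ((k + 1 : ℕ) + ν + 1) := by
          rw [← Gamma_add_one hk.ne']; push_cast; ring_nf

theorem Nat.factorial_two_mul_le_four_pow_mul_sq (m : ℕ) : (2 * m)! ≤ 4 ^ m * m ! ^ 2 := by
  have h := Nat.choose_mul_factorial_mul_factorial (show m ≤ 2 * m by omega)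
  rw [show 2 * m - m = m by omega, ← Nat.centralBinom_eq_two_mul_choose] at h
  rw [← h, sq, ← mul_assoc]
  exact Nat.mul_le_mul_right _ (Nat.mul_le_mul_right _ (Nat.centralBinom_le_four_pow m))

theorem Real.cosh_le_exp {x : ℝ} (hx : 0 ≤ x) : cosh x ≤ exp x := by
  rw [cosh_eq]
  linarith [exp_le_exp.2 (show -x ≤ x by linarith)]

theorem besselI_term_le {ν s : ℝ} (hν : 0 ≤ ν) (hs : 0 < s) (m : ℕ) :
    (s / 2) ^ (2 * (m : ℝ) + ν) / ((m ! : ℝ) * Gamma (m + ν + 1)) ≤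
      (s / 2) ^ ν / Gamma (ν + 1) * (s ^ (2 * m) / (2 * m)!) := by
  have hfact : ((2 * m)! : ℝ) * Gamma (ν + 1) ≤ 4 ^ m * ((m ! : ℝ) * Gamma (m + ν + 1)) :=
    calc ((2 * m)! : ℝ) * Gamma (ν + 1) ≤ 4 ^ m * m ! ^ 2 * Gamma (ν + 1) := by
          gcongr; exact_mod_cast Nat.factorial_two_mul_le_four_pow_mul_sq m
      _ = 4 ^ m * m ! * (m ! * Gamma (ν + 1)) := by ring
      _ ≤ 4 ^ m * m ! * Gamma (m + ν + 1) := by gcongr; exact factorial_mul_Gamma_le hν m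
      _ = 4 ^ m * (m ! * Gamma (m + ν + 1)) := by ring
  have hsplit : (s / 2) ^ (2 * (m : ℝ) + ν) = (s / 2) ^ ν * (s ^ (2 * m) / 4 ^ m) := by
    rw [rpow_add (by positivity), mul_comm, ← Nat.cast_ofNat, ← Nat.cast_mul, rpow_natCast,
      div_pow, pow_mul, pow_mul]
    norm_num
  calc (s / 2) ^ (2 * (m : ℝ) + ν) / ((m ! : ℝ) * Gamma (m + ν + 1))
      = (s / 2) ^ ν * s ^ (2 * m) / (4 ^ m * ((m ! : ℝ) * Gamma (m + ν + 1))) := by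
        rw [hsplit]; ring
    _ ≤ (s / 2) ^ ν * s ^ (2 * m) / ((2 * m)! * Gamma (ν + 1)) := by gcongr
    _ = (s / 2) ^ ν / Gamma (ν + 1) * (s ^ (2 * m) / (2 * m)!) := by ring

theorem besselI_le {ν s : ℝ} (hν : 0 ≤ ν) (hs : 0 < s) :
    besselI ν s ≤ (s / 2) ^ ν * exp s / Gamma (ν + 1) := by
  have hmaj := (hasSum_cosh s).mul_left ((s / 2) ^ ν / Gamma (ν + 1))
  have hsum : Summable fun m : ℕ ↦
      (s / 2) ^ (2 * (m : ℝ) + ν) / ((m ! : ℝ) * Gamma (m + ν + 1)) := by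
    refine .of_nonneg_of_le (fun m ↦ ?_) (besselI_term_le hν hs) hmaj.summable
    have := Gamma_pos_of_pos (show 0 < (m : ℝ) + ν + 1 by positivity)
    positivity
  calc besselI ν s ≤ (s / 2) ^ ν / Gamma (ν + 1) * cosh s :=
        (hsum.tsum_le_tsum (besselI_term_le hν hs) hmaj.summable).trans_eq hmaj.tsum_eq
    _ ≤ (s / 2) ^ ν * exp s / Gamma (ν + 1) := by
        rw [div_mul_eq_mul_div]
        gcongr
        exact cosh_le_exp hs.le

theorem Real.rpow_mul_exp_neg_le {u β : ℝ} (hu : 0 ≤ u) (hβ : 0 < β) :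
    u ^ β * exp (-u) ≤ β ^ β * exp (-β) := by
  have hlin : u / β ≤ exp (u / β - 1) := by linarith [add_one_le_exp (u / β - 1)]
  have hpow : u ^ β / β ^ β ≤ exp (u - β) := by
    calc u ^ β / β ^ β = (u / β) ^ β := (div_rpow hu hβ.le β).symm
      _ ≤ exp (u / β - 1) ^ β := by gcongr
      _ = exp (u - β) := by rw [← exp_mul]; congr 1; field_simp
  calc u ^ β * exp (-u) ≤ β ^ β * exp (u - β) * exp (-u) := by
        gcongr; rwa [div_le_iff₀' (by positivity)] at hpow
    _ = β ^ β * exp (-β) := by rw [mul_assoc, ← exp_add]; ring_nf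

theorem Real.rpow_neg_mul_exp_neg_div_le {t a β : ℝ} (ht : 0 < t) (ha : 0 < a) (hβ : 0 < β) :
    t ^ (-β) * exp (-(a / t)) ≤ (β / a) ^ β * exp (-β) := by
  have h := rpow_mul_exp_neg_le (div_pos ha ht).le hβ
  rw [div_rpow ha.le ht.le] at h
  calc t ^ (-β) * exp (-(a / t)) = a ^ β / t ^ β * exp (-(a / t)) / a ^ β := by
        rw [rpow_neg ht.le]; field_simp
    _ ≤ β ^ β * exp (-β) / a ^ β := by gcongr
    _ = (β / a) ^ β * exp (-β) := by rw [div_rpow hβ.le ha.le]; ring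

theorem Kker_le {ν t x y : ℝ} (hν : 0 ≤ ν) (ht : 0 < t) (hx : 0 < x) (hy : 0 < y) :
    Kker ν t x y ≤ y ^ (2 * ν) * x ^ (-(2 * ν)) / (2 * 4 ^ ν * Gamma (ν + 1)) *
      (t ^ (-(1 + ν)) * exp (-((x - y) ^ 2 / (4 * t)))) := by
  have hs : 0 < x * y / (2 * t) := by positivity
  have hexp : exp (-((x - y) ^ 2 / (4 * t))) =
      exp (x * y / (2 * t)) * exp (-((x ^ 2 + y ^ 2) / (4 * t))) := by
    rw [← exp_add]; congr 1; field_simp; ring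
  calc Kker ν t x y ≤ (2 * t)⁻¹ * y ^ ν * x ^ (-(3 * ν)) *
        ((x * y / (2 * t) / 2) ^ ν * exp (x * y / (2 * t)) / Gamma (ν + 1)) *
          exp (-((x ^ 2 + y ^ 2) / (4 * t))) := by
        unfold Kker; gcongr; exact besselI_le hν hs
    _ = _ := by
        have hy2 : y ^ (2 * ν) = y ^ ν * y ^ ν := by rw [two_mul, rpow_add hy]
        have hx2 : x ^ (-(2 * ν)) = x ^ (-(3 * ν)) * x ^ ν := by rw [← rpow_add hx]; ring_nf
        have ht1 : t ^ (-(1 + ν)) = t⁻¹ * (t ^ ν)⁻¹ := by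
          rw [neg_add, rpow_add ht, rpow_neg_one, rpow_neg ht.le]
        rw [hexp, hy2, hx2, ht1, show x * y / (2 * t) / 2 = x * y / (4 * t) by ring,
          div_rpow (by positivity) (by positivity), mul_rpow hx.le hy.le,
          mul_rpow (by norm_num) ht.le]
        field_simp

theorem exists_rpow_mul_Kker_le {ν δ : ℝ} (hν : 0 ≤ ν) (hδ : δ < 1 + ν) :
    ∃ C > 0, ∀ ⦃t x y : ℝ⦄, 0 < t → 0 < x → 0 < y → x ≠ y →
      t ^ δ * Kker ν t x y ≤ C * y ^ (2 * ν) * x ^ (-(2 * ν)) * |x - y| ^ (-(2 * (1 + ν - δ))) := by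
  set β := 1 + ν - δ with hβ_def
  have hβ : 0 < β := by linarith
  refine ⟨(4 * β) ^ β * exp (-β) / (2 * 4 ^ ν * Gamma (ν + 1)), by positivity,
    fun t x y ht hx hy hxy => ?_⟩
  have hxy' : 0 < |x - y| := abs_pos.2 (sub_ne_zero.2 hxy)
  have htime : t ^ δ * (t ^ (-(1 + ν)) * exp (-((x - y) ^ 2 / (4 * t)))) ≤
      (4 * β) ^ β * exp (-β) * |x - y| ^ (-(2 * β)) :=
    calc t ^ δ * (t ^ (-(1 + ν)) * exp (-((x - y) ^ 2 / (4 * t))))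
        = t ^ (-β) * exp (-((x - y) ^ 2 / 4 / t)) := by
          rw [← mul_assoc, ← rpow_add ht, div_div, hβ_def]; ring_nf
      _ ≤ (β / ((x - y) ^ 2 / 4)) ^ β * exp (-β) :=
          rpow_neg_mul_exp_neg_div_le ht (by positivity) hβ
      _ = (4 * β) ^ β * exp (-β) * |x - y| ^ (-(2 * β)) := by
          rw [← sq_abs, div_div_eq_mul_div, mul_comm β, div_rpow (by positivity) (by positivity),
            ← rpow_natCast, ← rpow_mul hxy'.le, rpow_neg hxy'.le]
          push_cast
          ring
  calc t ^ δ * Kker ν t x y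
      ≤ t ^ δ * (y ^ (2 * ν) * x ^ (-(2 * ν)) / (2 * 4 ^ ν * Gamma (ν + 1)) *
          (t ^ (-(1 + ν)) * exp (-((x - y) ^ 2 / (4 * t))))) := by
        gcongr; exact Kker_le hν ht hx hy
    _ = y ^ (2 * ν) * x ^ (-(2 * ν)) / (2 * 4 ^ ν * Gamma (ν + 1)) *
          (t ^ δ * (t ^ (-(1 + ν)) * exp (-((x - y) ^ 2 / (4 * t))))) := by ring
    _ ≤ y ^ (2 * ν) * x ^ (-(2 * ν)) / (2 * 4 ^ ν * Gamma (ν + 1)) *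
          ((4 * β) ^ β * exp (-β) * |x - y| ^ (-(2 * β))) := by gcongr
    _ = _ := by ring

theorem enl_dyadic (κ : ℝ) (n : ℤ) :
    enl κ ((2 : ℝ) ^ n) ((2 : ℝ) ^ (n + 1)) =
      Icc ((3 - κ) / 2 * (2 : ℝ) ^ n) ((3 + κ) / 2 * (2 : ℝ) ^ n) := by
  rw [enl, zpow_add_one₀ two_ne_zero]
  congr 1 <;> ring

theorem mul_add_le_abs_sub {κ d x y : ℝ} (hκ : 1 ≤ κ) (hd : 0 ≤ d)
    (hy : y ∈ Icc ((3 - κ) / 2 * d) ((3 + κ) / 2 * d))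
    (hx : x ∉ Icc ((3 - κ ^ 2) / 2 * d) ((3 + κ ^ 2) / 2 * d)) :
    (κ ^ 2 - κ) / (κ ^ 2 + 5) * (x + d) ≤ |x - y| := by
  set ε := (κ ^ 2 - κ) / (κ ^ 2 + 5)
  have hε : ε * (κ ^ 2 + 5) = κ ^ 2 - κ := div_mul_cancel₀ _ (by positivity)
  have hε0 : 0 ≤ ε := div_nonneg (by nlinarith) (by positivity)
  rw [mem_Icc, not_and_or, not_le, not_le] at hx
  rcases hx with hx | hx
  · calc ε * (x + d) ≤ ε * ((5 - κ ^ 2) / 2 * d) := by gcongr; linarith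
      _ ≤ (κ ^ 2 - κ) / 2 * d := by nlinarith [mul_nonneg hε0 hd, mul_nonneg (sq_nonneg κ) hd]
      _ ≤ y - x := by linarith [hy.1]
      _ ≤ |x - y| := by rw [abs_sub_comm]; exact le_abs_self _
  · have hε1 : ε ≤ 1 := by nlinarith
    calc ε * (x + d) ≤ x - (3 + κ) / 2 * d := by
          nlinarith [mul_nonneg (sub_nonneg.2 hε1) (sub_nonneg.2 hx.le)]
      _ ≤ x - y := by linarith [hy.2]
      _ ≤ |x - y| := le_abs_self _

theorem besselMeasure_ae_pos (ν : ℝ) : ∀ᵐ x ∂besselMeasure ν, 0 < x :=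
  (withDensity_absolutelyContinuous _ _).ae_le (ae_restrict_mem measurableSet_Ioi)

theorem setLIntegral_besselMeasure (ν : ℝ) {s : Set ℝ} (hs : MeasurableSet s) (f : ℝ → ℝ≥0∞) :
    ∫⁻ x in s, f x ∂besselMeasure ν =
      ∫⁻ x in s ∩ Ioi 0, ENNReal.ofReal (x ^ (2 * ν + 1)) * f x := by
  rw [besselMeasure, setLIntegral_withDensity_eq_setLIntegral_mul_non_measurable _ (by fun_prop)
    f hs (ae_of_all _ fun _ => ENNReal.ofReal_lt_top), Measure.restrict_restrict hs]
  rfl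

theorem lintegral_Ioi_add_rpow {q d : ℝ} (hq : q < -1) (hd : 0 < d) :
    ∫⁻ x in Ioi 0, ENNReal.ofReal ((x + d) ^ q) = ENNReal.ofReal (-d ^ (q + 1) / (q + 1)) := by
  have htrans := (measurePreserving_add_right volume d).setLIntegral_comp_preimage_emb
    (measurableEmbedding_addRight d) (fun x => ENNReal.ofReal (x ^ q)) (Ioi d)
  rw [preimage_add_const_Ioi, sub_self] at htrans
  rw [htrans, ← ofReal_integral_eq_lintegral_ofReal (integrableOn_Ioi_rpow_of_lt hq hd),
    integral_Ioi_rpow_of_lt hq hd]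
  filter_upwards [ae_restrict_mem measurableSet_Ioi] with x hx
  exact rpow_nonneg (hd.trans hx).le q

theorem setLIntegral_besselMeasure_majorant_le {ν β ε d y C : ℝ} (hν : 0 ≤ ν) (hC : 0 ≤ C)
    (hβ : 1 < β) (hε : 0 < ε) (hd : 0 < d) (hy : 0 ≤ y) (hy3 : y ≤ 3 * d) {s : Set ℝ}
    (hs : MeasurableSet s) (hsep : ∀ x ∈ s, ε * (x + d) ≤ |x - y|) :
    ∫⁻ x in s, ENNReal.ofReal (C * y ^ (2 * ν) * x ^ (-(2 * ν)) * |x - y| ^ (-(2 * β)))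
        ∂besselMeasure ν ≤
      ENNReal.ofReal (C * 3 ^ (2 * ν) * ε ^ (-(2 * β)) / (2 * β - 2) * d ^ (2 * ν + 2 - 2 * β)) := by
  set A := C * (3 * d) ^ (2 * ν) * ε ^ (-(2 * β)) with hA
  have hpoint : ∀ x ∈ s ∩ Ioi 0, x ^ (2 * ν + 1) *
      (C * y ^ (2 * ν) * x ^ (-(2 * ν)) * |x - y| ^ (-(2 * β))) ≤ A * (x + d) ^ (1 - 2 * β) := by
    rintro x ⟨hxs, hx : 0 < x⟩
    have hxd : 0 < x + d := by linarith
    calc x ^ (2 * ν + 1) * (C * y ^ (2 * ν) * x ^ (-(2 * ν)) * |x - y| ^ (-(2 * β)))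
        = C * y ^ (2 * ν) * x * |x - y| ^ (-(2 * β)) := by
          rw [rpow_add hx, rpow_one, rpow_neg hx.le]; field_simp
      _ ≤ C * (3 * d) ^ (2 * ν) * (x + d) * (ε * (x + d)) ^ (-(2 * β)) := by
          gcongr C * ?_ * ?_ * ?_
          · exact rpow_le_rpow hy hy3 (by linarith)
          · linarith
          · exact rpow_le_rpow_of_nonpos (mul_pos hε hxd) (hsep x hxs) (by linarith)
      _ = A * (x + d) ^ (1 - 2 * β) := by
          rw [mul_rpow hε.le hxd.le, sub_eq_add_neg, rpow_add hxd, rpow_one]; ring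
  calc ∫⁻ x in s, ENNReal.ofReal (C * y ^ (2 * ν) * x ^ (-(2 * ν)) * |x - y| ^ (-(2 * β)))
        ∂besselMeasure ν
      ≤ ∫⁻ x in s ∩ Ioi 0, ENNReal.ofReal (A * (x + d) ^ (1 - 2 * β)) := by
        rw [setLIntegral_besselMeasure ν hs]
        refine setLIntegral_mono' (hs.inter measurableSet_Ioi) fun x hx => ?_
        rw [← ENNReal.ofReal_mul (rpow_nonneg hx.2.le _)]
        exact ENNReal.ofReal_le_ofReal (hpoint x hx)
    _ ≤ ∫⁻ x in Ioi 0, ENNReal.ofReal A * ENNReal.ofReal ((x + d) ^ (1 - 2 * β)) := by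
        simp_rw [ENNReal.ofReal_mul (by positivity : 0 ≤ A)]
        exact lintegral_mono_set inter_subset_right
    _ = ENNReal.ofReal (A * (d ^ (2 - 2 * β) / (2 * β - 2))) := by
        rw [lintegral_const_mul' _ _ ENNReal.ofReal_ne_top,
          lintegral_Ioi_add_rpow (by linarith) hd, ← ENNReal.ofReal_mul (by positivity)]
        congr 2
        rw [show 1 - 2 * β + 1 = 2 - 2 * β by ring, neg_div, ← div_neg, neg_sub]
    _ = _ := by
        rw [hA, mul_rpow (by norm_num) hd.le, add_sub_assoc, rpow_add hd]
        congr 1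
        ring

theorem Kker_complement_integral_bound_general (ν γ δ κ : ℝ) (hν : 0 < ν)
    (hγ : γ < min (1/2) ν) (hδ' : δ < γ)
    (hκ : 1 < κ) (hκ2 : κ < 2) :
    ∃ C : ℝ, 0 < C ∧ ∀ n : ℤ, ∀ y ∈ enl κ ((2:ℝ)^n) ((2:ℝ)^(n+1)),
      (∫⁻ x in (enl (κ^2) ((2:ℝ)^n) ((2:ℝ)^(n+1)))ᶜ,
          ⨆ (t : ℝ) (_ : 0 < t), ENNReal.ofReal (t ^ δ * Kker ν t x y)
        ∂(besselMeasure ν))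
      ≤ ENNReal.ofReal (C * ((2:ℝ)^n) ^ (2 * δ)) := by
  have hδν : δ < ν := hδ'.trans (hγ.trans_le (min_le_right _ _))
  obtain ⟨C₁, hC₁, hK⟩ := exists_rpow_mul_Kker_le (δ := δ) hν.le (by linarith)
  set β := 1 + ν - δ
  have hβ : 1 < β := by linarith
  set ε := (κ ^ 2 - κ) / (κ ^ 2 + 5)
  have hε : 0 < ε := div_pos (by nlinarith) (by positivity)
  refine ⟨C₁ * 3 ^ (2 * ν) * ε ^ (-(2 * β)) / (2 * β - 2),
    div_pos (by positivity) (by linarith), fun n y hy => ?_⟩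
  rw [enl_dyadic] at hy ⊢
  set d := (2 : ℝ) ^ n
  have hd : 0 < d := by positivity
  have hy0 : 0 < y := lt_of_lt_of_le (by nlinarith) hy.1
  calc _ ≤ ∫⁻ x in (Icc ((3 - κ ^ 2) / 2 * d) ((3 + κ ^ 2) / 2 * d))ᶜ,
          ENNReal.ofReal (C₁ * y ^ (2 * ν) * x ^ (-(2 * ν)) * |x - y| ^ (-(2 * β)))
          ∂besselMeasure ν := by
        refine lintegral_mono_ae ?_
        filter_upwards [ae_restrict_of_ae (besselMeasure_ae_pos ν),
          ae_restrict_mem measurableSet_Icc.compl] with x hx hxQ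
        have hsep := mul_add_le_abs_sub hκ.le hd.le hy hxQ
        have hxy : x ≠ y := sub_ne_zero.1 (abs_pos.1 ((mul_pos hε (add_pos hx hd)).trans_le hsep))
        exact iSup₂_le fun t ht => ENNReal.ofReal_le_ofReal (hK ht hx hy0 hxy)
    _ ≤ _ := setLIntegral_besselMeasure_majorant_le hν.le hC₁.le hβ hε hd hy0.le
          (by nlinarith [hy.2]) measurableSet_Icc.compl
          fun x hx => mul_add_le_abs_sub hκ.le hd.le hy hx
    _ = _ := by rw [show 2 * ν + 2 - 2 * β = 2 * δ by ring]

theorem Kker_complement_integral_bound (ν γ δ κ : ℝ) (hν : 0 < ν)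
    (hγ0 : 0 < γ) (hγ : γ < min (1/2) ν) (hδ : -γ < δ) (hδ' : δ < γ)
    (hκ : 1 < κ) (hκ2 : κ < 2) :
    ∃ C : ℝ, 0 < C ∧ ∀ n : ℤ, ∀ y ∈ enl κ ((2:ℝ)^n) ((2:ℝ)^(n+1)),
      (∫⁻ x in (enl (κ^2) ((2:ℝ)^n) ((2:ℝ)^(n+1)))ᶜ,
          ⨆ (t : ℝ) (_ : 0 < t), ENNReal.ofReal (t ^ δ * Kker ν t x y)
        ∂(besselMeasure ν))
      ≤ ENNReal.ofReal (C * ((2:ℝ)^n) ^ (2 * δ)) :=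
  Kker_complement_integral_bound_general ν γ δ κ hν hγ hδ' hκ hκ2
end
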